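/- Let T_R = (Z/RZ)² be the discrete two-dimensional torus. There exist α₀ > 0 and a function R₀ : (0, α₀) → ℕ with the following property. Let μ be a probability measure on {0,1}^{T_R} invariant under all translations of T_R, let 0 < α < α₀, and let K ≥ 1 be such that for every k ≥ K and all pairwise distinct sites t₁,…,t_k ∈ T_R one has μ( ξ_{t₁} = ξ_{t₂} = … = ξ_{t_k} = 1 ) ≤ α^k. Then for every R ≥ √(K/(3α)) + R₀(α) and every t ∈ T_R, μ( ξ_t = 1 ) ≤ 3α. -/

import Mathlib

/-!
Let `N` be the number of occupied sites. Translation invariance makes the one-point density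
`p` constant, so `E N = R² p`, and summing the correlation bound over all `K`-sets of sites gives
`E (N choose K) ≤ (R² choose K) α^K ≤ (α R²)^K / K!`. Jensen's inequality for the convex
extension `x(x-1)⋯(x-K+1)` of `K! (x choose K)` then bounds `E N (E N - 1) ⋯ (E N - K + 1)` by
`(α R²)^K`, whereas `x(x-1)⋯(x-K+1) ≥ (x/3)^K` for `x ≥ K` because `K^K ≤ 3^K K!`. Once
`3 α R² ≥ K` this forces `E N ≤ 3 α R²`, so `α₀ = 1` and `R₀ = 0` work.
-/

open Finset

theorem pow_mul_descPochhammer_eval_le {K : ℕ} {c s : ℝ} (hc : 1 ≤ c) (hs : K - 1 ≤ s) :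
    c ^ K * (descPochhammer ℝ K).eval s ≤ (descPochhammer ℝ K).eval (c * s) := by
  rw [descPochhammer_eval_eq_prod_range, descPochhammer_eval_eq_prod_range,
    show c ^ K = ∏ _i ∈ range K, c by simp, ← prod_mul_distrib]
  refine prod_le_prod (fun i hi => ?_) (fun i hi => ?_)
  · have hiK : (i : ℝ) + 1 ≤ K := by exact_mod_cast mem_range.mp hi
    exact mul_nonneg (by linarith) (by linarith)
  · nlinarith [i.cast_nonneg (α := ℝ)]

theorem pow_self_le_three_pow_mul_factorial (K : ℕ) : (K : ℝ) ^ K ≤ 3 ^ K * K.factorial := by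
  have hexp : (K : ℝ) ^ K / K.factorial ≤ Real.exp 1 ^ K := by
    rw [← Real.exp_nat_mul, mul_one]
    exact Real.pow_div_factorial_le_exp (K : ℝ) K.cast_nonneg K
  have he : Real.exp 1 ^ K ≤ 3 ^ K :=
    pow_le_pow_left₀ (Real.exp_pos 1).le (Real.exp_one_lt_d9.le.trans (by norm_num)) K
  rw [div_le_iff₀ (by positivity)] at hexp
  nlinarith [show (0 : ℝ) ≤ K.factorial by positivity]

theorem pow_div_three_le_descPochhammer_eval {K : ℕ} {x : ℝ} (hx : K ≤ x) :
    (x / 3) ^ K ≤ (descPochhammer ℝ K).eval x := by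
  rcases K.eq_zero_or_pos with rfl | hK
  · simp
  have hK' : (0 : ℝ) < K := by exact_mod_cast hK
  have hscale := pow_mul_descPochhammer_eval_le (K := K) (c := x / K) (s := K)
    ((one_le_div hK').mpr hx) (by linarith)
  rw [descPochhammer_eval_eq_descFactorial, Nat.descFactorial_self,
    div_mul_cancel₀ _ hK'.ne'] at hscale
  calc (x / 3) ^ K = (x / K) ^ K * (K ^ K / 3 ^ K) := by
        rw [div_pow, div_pow]; field_simp
    _ ≤ (x / K) ^ K * K.factorial := by
        gcongr
        · exact pow_nonneg (div_nonneg (hK'.le.trans hx) hK'.le) K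
        · rw [div_le_iff₀ (by positivity), mul_comm]
          exact pow_self_le_three_pow_mul_factorial K
    _ ≤ _ := hscale

theorem sum_mul_le_of_sum_mul_choose_le {ι : Type*} {t : Finset ι} (w : ι → ℝ) (X : ι → ℕ)
    (h₀ : ∀ i ∈ t, 0 ≤ w i) (h₁ : ∑ i ∈ t, w i = 1) {K : ℕ} (hK : K ≠ 0) {m : ℝ} (hm : 0 ≤ m)
    (hKm : K ≤ 3 * m) (hmom : ∑ i ∈ t, w i * (X i).choose K ≤ m ^ K / K.factorial) :
    ∑ i ∈ t, w i * X i ≤ 3 * m := by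
  set x := ∑ i ∈ t, w i * X i
  by_contra! hx
  have hjensen := descPochhammer_eval_div_factorial_le_sum_choose hK X w h₀ h₁ (by linarith)
  have hupper : (descPochhammer ℝ K).eval x ≤ m ^ K :=
    (div_le_div_iff_of_pos_right (by positivity)).mp (hjensen.trans hmom)
  have hlower : m ^ K < (descPochhammer ℝ K).eval x :=
    (pow_lt_pow_left₀ (by linarith) hm hK).trans_le
      (pow_div_three_le_descPochhammer_eval (by linarith))
  linarith

section Configurations

variable {V : Type*} [Fintype V] [DecidableEq V] (μ : (V → Bool) → ℝ)

theorem sum_mul_choose_card_ones (K : ℕ) :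
    ∑ ξ, μ ξ * ((#{v | ξ v = true}).choose K : ℝ)
      = ∑ T ∈ powersetCard K univ, ∑ ξ ∈ univ.filter (fun ξ : V → Bool => ∀ t ∈ T, ξ t = true),
          μ ξ := by
  have hchoose : ∀ ξ : V → Bool, ((#{v | ξ v = true}).choose K : ℝ)
      = #{T ∈ powersetCard K univ | ∀ t ∈ T, ξ t = true} := by
    intro ξ
    rw [← card_powersetCard]
    congr 2
    ext T
    simp [subset_iff, and_comm]
  simp_rw [hchoose, card_filter, Nat.cast_sum, mul_sum, sum_filter]
  rw [sum_comm]
  simp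

theorem sum_mul_card_ones :
    ∑ ξ, μ ξ * (#{v | ξ v = true} : ℝ)
      = ∑ v, ∑ ξ ∈ univ.filter (fun ξ : V → Bool => ξ v = true), μ ξ := by
  simpa [powersetCard_one] using sum_mul_choose_card_ones μ 1

variable [AddGroup V]

theorem sum_filter_apply_eq_of_forall_shift_eq
    (hinv : ∀ (v : V) (ξ : V → Bool), μ (fun t => ξ (t + v)) = μ ξ) (s t : V) :
    ∑ ξ ∈ univ.filter (fun ξ : V → Bool => ξ s = true), μ ξ
      = ∑ ξ ∈ univ.filter (fun ξ : V → Bool => ξ t = true), μ ξ := by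
  rw [sum_filter, sum_filter]
  refine Fintype.sum_equiv ((Equiv.addRight (-t + s)).symm.arrowCongr (Equiv.refl Bool)) _ _
    fun ξ => ?_
  have hshift : (Equiv.addRight (-t + s)).symm.arrowCongr (Equiv.refl Bool) ξ
      = fun u => ξ (u + (-t + s)) := rfl
  simp only [hshift, hinv, add_neg_cancel_left]

theorem sum_mul_card_ones_eq_card_mul
    (hinv : ∀ (v : V) (ξ : V → Bool), μ (fun t => ξ (t + v)) = μ ξ) (t : V) :
    ∑ ξ, μ ξ * (#{v | ξ v = true} : ℝ)
      = Fintype.card V * ∑ ξ ∈ univ.filter (fun ξ : V → Bool => ξ t = true), μ ξ := by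
  simp [sum_mul_card_ones, sum_filter_apply_eq_of_forall_shift_eq μ hinv _ t]

end Configurations

theorem peierls_implies_small_density :
    ∃ α₀ : ℝ, 0 < α₀ ∧ ∃ R₀ : ℝ → ℕ,
      ∀ α : ℝ, 0 < α → α < α₀ →
      ∀ K : ℕ, 1 ≤ K →
      ∀ (R : ℕ) (_ : NeZero R)
        (μ : ((ZMod R × ZMod R) → Bool) → ℝ),
        (∀ ξ, 0 ≤ μ ξ) →
        (∑ ξ : (ZMod R × ZMod R) → Bool, μ ξ) = 1 →
        (∀ (v : ZMod R × ZMod R) (ξ : (ZMod R × ZMod R) → Bool),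
          μ (fun t => ξ (t + v)) = μ ξ) →
        (∀ k : ℕ, K ≤ k → ∀ T : Finset (ZMod R × ZMod R), T.card = k →
          (∑ ξ ∈ Finset.univ.filter
              (fun ξ : (ZMod R × ZMod R) → Bool => ∀ t ∈ T, ξ t = true), μ ξ)
            ≤ α ^ k) →
        Real.sqrt ((K : ℝ) / (3 * α)) + (R₀ α : ℝ) ≤ (R : ℝ) →
        ∀ t : ZMod R × ZMod R,
          (∑ ξ ∈ Finset.univ.filter
              (fun ξ : (ZMod R × ZMod R) → Bool => ξ t = true), μ ξ) ≤ 3 * α := by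
  refine ⟨1, one_pos, fun _ => 0, ?_⟩
  intro α hα _ K hK R _ μ hμ0 hμ1 hinv hcorr hR t
  set n := Fintype.card (ZMod R × ZMod R)
  have hn : (0 : ℝ) < n := by exact_mod_cast Fintype.card_pos
  have hKn : (K : ℝ) ≤ 3 * (α * n) := by
    have hsq := (Real.sqrt_le_left (Nat.cast_nonneg R)).mp
      (by simpa only [Nat.cast_zero, add_zero] using hR)
    rw [div_le_iff₀ (by positivity)] at hsq
    have hcard : (n : ℝ) = R ^ 2 := by simp [n, sq]
    rw [hcard]
    linarith
  have hmoment : ∑ ξ, μ ξ * ((#{v | ξ v = true}).choose K : ℝ) ≤ (α * n) ^ K / K.factorial := by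
    rw [sum_mul_choose_card_ones]
    calc _ ≤ ∑ _T ∈ powersetCard K (univ : Finset (ZMod R × ZMod R)), α ^ K :=
          sum_le_sum fun T hT => hcorr K le_rfl T (mem_powersetCard.mp hT).2
      _ = (n.choose K : ℝ) * α ^ K := by simp [n]
      _ ≤ (n : ℝ) ^ K / K.factorial * α ^ K := by gcongr; exact Nat.choose_le_pow_div K n
      _ = (α * n) ^ K / K.factorial := by ring
  have hmean := sum_mul_le_of_sum_mul_choose_le (t := univ) μ (fun ξ => #{v | ξ v = true})
    (fun ξ _ => hμ0 ξ) hμ1 (by omega) (by positivity) hKn hmoment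
  rw [sum_mul_card_ones_eq_card_mul μ hinv t] at hmean
  exact le_of_mul_le_mul_left (by linarith) hn
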